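/- Let A_1,…,A_6 be the linear endomorphisms of ℝ^6 (coordinates (X,Y,U1,U2,U3,U4)) given by A_1 = (3X, 2Y, 2U1, 2U2, U3, U4), A_2 = (0, X, 0, 0, −4U2, −4U1), A_3 = (0, 0, X, 0, −(2/3)U1, −2Y), A_4 = (0, 0, 0, X, −2Y, −(2/3)U2), A_5 = (0, 0, 0, 0, X, 0), A_6 = (0, 0, 0, 0, 0, X). Then for every linear form L : ℝ^6 → ℝ, the linear span of the seven linear forms L∘A_1, L∘A_2, L∘A_3, L∘A_4, L∘A_5, L∘A_6 and L in the dual space of ℝ^6 has dimension at most 5; in particular this span is never all of (ℝ^6)*. -/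

import Mathlib

/-!
The matrices of `A₂, …, A₆` have zero `U3`- and `U4`-columns, while `A₁` is the identity on the
`(U3, U4)`-plane. This plane is two-dimensional, so it contains a nonzero `v` with `L v = 0`, and
then `v` is a common zero of all seven forms. Linear forms with a common nonzero zero span a proper
subspace of the dual, which has dimension `6`.
-/

open Matrix

/-- The linear part `A₁ = (3X, 2Y, 2U1, 2U2, U3, U4)` of the Euler vector field `η₁`. -/
noncomputable def A1 : (Fin 6 → ℝ) →ₗ[ℝ] (Fin 6 → ℝ) :=
  (Matrix.diagonal ![3, 2, 2, 2, 1, 1]).mulVecLin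

/-- The linear part `A₂ = (0, X, 0, 0, −4U2, −4U1)` of `η₂`. -/
noncomputable def A2 : (Fin 6 → ℝ) →ₗ[ℝ] (Fin 6 → ℝ) :=
  ((Matrix.single 1 0 (1:ℝ) + Matrix.single 4 3 (-4) +
    Matrix.single 5 2 (-4) : Matrix (Fin 6) (Fin 6) ℝ)).mulVecLin

/-- The linear part `A₃ = (0, 0, X, 0, −(2/3)U1, −2Y)` of `η₃`. -/
noncomputable def A3 : (Fin 6 → ℝ) →ₗ[ℝ] (Fin 6 → ℝ) :=
  ((Matrix.single 2 0 (1:ℝ) + Matrix.single 4 2 (-(2/3)) +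
    Matrix.single 5 1 (-2) : Matrix (Fin 6) (Fin 6) ℝ)).mulVecLin

/-- The linear part `A₄ = (0, 0, 0, X, −2Y, −(2/3)U2)` of `η₄`. -/
noncomputable def A4 : (Fin 6 → ℝ) →ₗ[ℝ] (Fin 6 → ℝ) :=
  ((Matrix.single 3 0 (1:ℝ) + Matrix.single 4 1 (-2) +
    Matrix.single 5 3 (-(2/3)) : Matrix (Fin 6) (Fin 6) ℝ)).mulVecLin

/-- The linear part `A₅ = (0, 0, 0, 0, X, 0)` of `η₅`. -/
noncomputable def A5 : (Fin 6 → ℝ) →ₗ[ℝ] (Fin 6 → ℝ) :=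
  ((Matrix.single 4 0 (1:ℝ) : Matrix (Fin 6) (Fin 6) ℝ)).mulVecLin

/-- The linear part `A₆ = (0, 0, 0, 0, 0, X)` of `η₆`. -/
noncomputable def A6 : (Fin 6 → ℝ) →ₗ[ℝ] (Fin 6 → ℝ) :=
  ((Matrix.single 5 0 (1:ℝ) : Matrix (Fin 6) (Fin 6) ℝ)).mulVecLin

section DualSpan

variable {K V : Type*} [Field K] [AddCommGroup V] [Module K V] [FiniteDimensional K V]

theorem finrank_span_lt_of_forall_apply_eq_zero {S : Set (Module.Dual K V)} {v : V} (hv : v ≠ 0)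
    (hS : ∀ f ∈ S, f v = 0) : Module.finrank K (Submodule.span K S) < Module.finrank K V := by
  have hle : Submodule.span K S ≤ LinearMap.ker (Module.Dual.eval K V v) := Submodule.span_le.2 hS
  have hne : LinearMap.ker (Module.Dual.eval K V v) ≠ ⊤ := fun h ↦
    hv <| (Module.forall_dual_apply_eq_zero_iff K v).1 fun f ↦ by
      simpa using h.ge (Submodule.mem_top (x := f))
  calc Module.finrank K (Submodule.span K S)
      ≤ Module.finrank K (LinearMap.ker (Module.Dual.eval K V v)) := Submodule.finrank_mono hle
    _ < Module.finrank K (Module.Dual K V) := Submodule.finrank_lt hne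
    _ = Module.finrank K V := Subspace.dual_finrank_eq

end DualSpan

def inclU34 : Matrix (Fin 6) (Fin 2) ℝ := !![0, 0; 0, 0; 0, 0; 0, 0; 1, 0; 0, 1]

theorem inclU34_mulVec_injective : Function.Injective inclU34.mulVec := by
  intro a b h
  ext j
  fin_cases j
  · simpa [inclU34, Matrix.vecHead] using congrFun h 4
  · simpa [inclU34, Matrix.vecHead, Matrix.vecTail] using congrFun h 5

theorem A1_inclU34 (w : Fin 2 → ℝ) : A1 (inclU34 *ᵥ w) = inclU34 *ᵥ w := by
  ext i
  fin_cases i <;> simp [A1, inclU34, Matrix.mulVec_diagonal]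

theorem A2_inclU34 (w : Fin 2 → ℝ) : A2 (inclU34 *ᵥ w) = 0 := by
  simp [A2, inclU34, Matrix.single_mulVec_eq]

theorem A3_inclU34 (w : Fin 2 → ℝ) : A3 (inclU34 *ᵥ w) = 0 := by
  simp [A3, inclU34, Matrix.single_mulVec_eq]

theorem A4_inclU34 (w : Fin 2 → ℝ) : A4 (inclU34 *ᵥ w) = 0 := by
  simp [A4, inclU34, Matrix.single_mulVec_eq]

theorem A5_inclU34 (w : Fin 2 → ℝ) : A5 (inclU34 *ᵥ w) = 0 := by
  simp [A5, inclU34, Matrix.single_mulVec_eq]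

theorem A6_inclU34 (w : Fin 2 → ℝ) : A6 (inclU34 *ᵥ w) = 0 := by
  simp [A6, inclU34, Matrix.single_mulVec_eq]

theorem exists_ne_zero_apply_inclU34_eq_zero (L : (Fin 6 → ℝ) →ₗ[ℝ] ℝ) :
    ∃ w ≠ 0, L (inclU34 *ᵥ w) = 0 := by
  obtain ⟨w, hw, hw0⟩ := (Submodule.ne_bot_iff _).1 <|
    (L ∘ₗ inclU34.mulVecLin).ker_ne_bot_of_finrank_lt (by simp)
  exact ⟨w, hw0, hw⟩

/-- For every linear form `L : ℝ⁶ → ℝ`, the span of `L∘A₁, …, L∘A₆, L` in the dual of `ℝ⁶`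
has dimension at most `5`; in particular it is never the whole dual space. This is the
obstruction showing `F₃₃` admits no hyperplane section of `𝒜ₑ`-codimension `1`. -/
theorem span_L_comp_liftF33_linear_parts_le_five :
    ∀ L : (Fin 6 → ℝ) →ₗ[ℝ] ℝ,
      Module.finrank ℝ
        (Submodule.span ℝ
          ({L ∘ₗ A1, L ∘ₗ A2, L ∘ₗ A3, L ∘ₗ A4, L ∘ₗ A5, L ∘ₗ A6, L} :
            Set ((Fin 6 → ℝ) →ₗ[ℝ] ℝ))) ≤ 5 := by
  intro L
  obtain ⟨w, hw0, hLw⟩ := exists_ne_zero_apply_inclU34_eq_zero L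
  have hv : inclU34 *ᵥ w ≠ 0 := by
    simpa using inclU34_mulVec_injective.ne (a₂ := 0) hw0
  have hlt := finrank_span_lt_of_forall_apply_eq_zero
    (S := {L ∘ₗ A1, L ∘ₗ A2, L ∘ₗ A3, L ∘ₗ A4, L ∘ₗ A5, L ∘ₗ A6, L}) hv
    (by simp [A1_inclU34, A2_inclU34, A3_inclU34, A4_inclU34, A5_inclU34, A6_inclU34, hLw])
  simpa [Nat.lt_succ_iff] using hlt
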